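/- arXiv:2601.21267 — 2 statements merged into one kernel-verified Lean document; each statement's English description precedes it below -/
import Mathlib

section
/- Let n ≥ 2 be a composite integer, say n = ab with a, b > 1, and let k < l be positive odd integers. Then (n^l + 1)·σ_k(n) ≠ (n^k + 1)·σ_l(n), where σ_m(n) = Σ_{d∣n} d^m. Equivalently, the n-th coefficient of (D^l+1)G_{k+1}^{(1)} − (D^k+1)G_{l+1}^{(1)} is nonzero at composite n. -/
theorem stmt_14 (n a b : ℕ) (ha : 1 < a) (hb : 1 < b) (hn : n = a * b)
    (k l : ℕ) (hk : Odd k) (hl : Odd l) (hkpos : 0 < k) (hkl : k < l) :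
    (n ^ l + 1) * (∑ d ∈ n.divisors, d ^ k) ≠ (n ^ k + 1) * (∑ d ∈ n.divisors, d ^ l) := by
  have hn0 : n ≠ 0 := by subst hn; positivity
  -- per-divisor identity
  have key : ∀ d ∈ n.divisors,
      ((n : ℤ) ^ l + 1) * (d : ℤ) ^ k - ((n : ℤ) ^ k + 1) * (d : ℤ) ^ l
      = ((d : ℤ) ^ (k + l) * (((n / d : ℕ) : ℤ) ^ l - ((n / d : ℕ) : ℤ) ^ k)
          - ((d : ℤ) ^ l - (d : ℤ) ^ k)) := by
    intro d hd
    have hdd : (d * (n / d) : ℕ) = n := Nat.mul_div_cancel' (Nat.dvd_of_mem_divisors hd)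
    have hcast : (n : ℤ) = (d : ℤ) * ((n / d : ℕ) : ℤ) := by exact_mod_cast hdd.symm
    rw [hcast]; ring
  have swap : ∑ d ∈ n.divisors, (d : ℤ) ^ (k + l) * (((n / d : ℕ) : ℤ) ^ l - ((n / d : ℕ) : ℤ) ^ k)
      = ∑ d ∈ n.divisors, ((n / d : ℕ) : ℤ) ^ (k + l) * ((d : ℤ) ^ l - (d : ℤ) ^ k) := by
    rw [← Nat.sum_div_divisors n
      (fun d => ((n / d : ℕ) : ℤ) ^ (k + l) * ((d : ℤ) ^ l - (d : ℤ) ^ k))]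
    refine Finset.sum_congr rfl fun d hd => ?_
    rw [Nat.div_div_self (Nat.dvd_of_mem_divisors hd) hn0]
  have main : ((n : ℤ) ^ l + 1) * (∑ d ∈ n.divisors, (d : ℤ) ^ k)
      - ((n : ℤ) ^ k + 1) * (∑ d ∈ n.divisors, (d : ℤ) ^ l)
      = ∑ d ∈ n.divisors, (((n / d : ℕ) : ℤ) ^ (k + l) - 1) * ((d : ℤ) ^ l - (d : ℤ) ^ k) := by
    rw [Finset.mul_sum, Finset.mul_sum, ← Finset.sum_sub_distrib,
      Finset.sum_congr rfl key, Finset.sum_sub_distrib, swap, ← Finset.sum_sub_distrib]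
    exact Finset.sum_congr rfl fun d hd => by ring
  have hpos : 0 < ∑ d ∈ n.divisors, (((n / d : ℕ) : ℤ) ^ (k + l) - 1) * ((d : ℤ) ^ l - (d : ℤ) ^ k) := by
    apply Finset.sum_pos'
    · intro d hd
      have hd1 : 1 ≤ d := (Nat.pos_of_mem_divisors hd)
      have he1 : 1 ≤ n / d := Nat.div_pos (Nat.le_of_dvd (Nat.pos_of_ne_zero hn0)
        (Nat.dvd_of_mem_divisors hd)) (Nat.pos_of_mem_divisors hd)
      have h1 : (1 : ℤ) ≤ ((n / d : ℕ) : ℤ) ^ (k + l) := one_le_pow₀ (by exact_mod_cast he1)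
      have h2 : (d : ℤ) ^ k ≤ (d : ℤ) ^ l :=
        pow_le_pow_right₀ (by exact_mod_cast hd1) (le_of_lt hkl)
      nlinarith
    · refine ⟨a, ?_, ?_⟩
      · exact Nat.mem_divisors.mpr ⟨⟨b, hn⟩, hn0⟩
      · have hna : n / a = b := by rw [hn, Nat.mul_div_cancel_left _ (by omega)]
        rw [hna]
        have h1 : (1 : ℤ) < (b : ℤ) ^ (k + l) :=
          one_lt_pow₀ (by exact_mod_cast hb) (by omega)
        have h2 : (a : ℤ) ^ k < (a : ℤ) ^ l :=
          pow_lt_pow_right₀ (by exact_mod_cast ha) hkl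
        nlinarith
  intro heq
  have heqz : ((n : ℤ) ^ l + 1) * (∑ d ∈ n.divisors, (d : ℤ) ^ k)
      = ((n : ℤ) ^ k + 1) * (∑ d ∈ n.divisors, (d : ℤ) ^ l) := by exact_mod_cast heq
  rw [heqz, sub_self] at main
  exact hpos.ne' main.symm
end

section
/- Let F be a finite field (or finite local ring R = O/ϖⁿ), and fix x, y ∈ R with y a unit. Then #{M ∈ GL₂(R) : tr M = x, det M = y} ≤ C · (1/#R) · #{M ∈ GL₂(R) : det M = y} for an absolute constant C (independent of n). -/
attribute [local instance] Classical.propDecidable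

open Finset

section Abstract
variable {R : Type*} [CommRing R] [Fintype R]

/-- powers of π die exactly at n -/
lemma pow_eq_zero_iff_ge {π : R} {n : ℕ} (hπ0 : π ^ n = 0) (hπ1 : π ^ (n-1) ≠ 0)
    (k : ℕ) : π ^ k = 0 ↔ n ≤ k := by
  constructor
  · intro h
    by_contra hk
    push_neg at hk
    apply hπ1
    have : π ^ (n-1) = π ^ k * π ^ (n-1-k) := by
      rw [← pow_add]
      congr 1
      omega
    rw [this, h, zero_mul]
  · intro h
    have : π ^ k = π ^ n * π ^ (k - n) := by
      rw [← pow_add]; congr 1; omega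
    rw [this, hπ0, zero_mul]

/-- L8: if a product lies in (π^k), one factor lies in (π^⌈k/2⌉) -/
lemma mem_half {π : R} {n : ℕ} (hπ0 : π ^ n = 0) (hπ1 : π ^ (n-1) ≠ 0)
    (hfac : ∀ r : R, ∃ j ≤ n, ∃ u : Rˣ, r = ↑u * π ^ j)
    {k : ℕ} (hk : k ≤ n) {u w : R} (h : u * w ∈ Ideal.span {π ^ k}) :
    u ∈ Ideal.span {π ^ ((k+1)/2)} ∨ w ∈ Ideal.span {π ^ ((k+1)/2)} := by
  obtain ⟨i, hi, ui, hui⟩ := hfac u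
  obtain ⟨j, hj, uj, huj⟩ := hfac w
  by_cases hik : (k+1)/2 ≤ i
  · left
    rw [hui, Ideal.mem_span_singleton]
    exact Dvd.dvd.mul_left (pow_dvd_pow π hik) _
  by_cases hjk : (k+1)/2 ≤ j
  · right
    rw [huj, Ideal.mem_span_singleton]
    exact Dvd.dvd.mul_left (pow_dvd_pow π hjk) _
  exfalso
  push_neg at hik hjk
  have hij : i + j + 1 ≤ k := by omega
  rw [hui, huj, Ideal.mem_span_singleton] at h
  have h2 : π ^ k ∣ π ^ (i+j) := by
    have h1 : (↑ui⁻¹ : R) * ↑ui = 1 := ui.inv_mul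
    have h2 : (↑uj⁻¹ : R) * ↑uj = 1 := uj.inv_mul
    have : (π:R) ^ (i+j) = (↑ui⁻¹ * ↑uj⁻¹ : R) * (↑ui * π ^ i * (↑uj * π ^ j)) := by
      calc (π:R) ^ (i+j) = ((↑ui⁻¹:R) * ↑ui) * ((↑uj⁻¹:R) * ↑uj) * (π ^ i * π ^ j) := by
            rw [h1, h2, pow_add]; ring
        _ = _ := by ring
    rw [this]
    exact Dvd.dvd.mul_left h _
  obtain ⟨t, ht⟩ := h2
  apply hπ1
  have : π ^ (n-1) = π ^ (i+j) * π ^ (n-1-(i+j)) := by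
    rw [← pow_add]; congr 1; omega
  rw [this, ht]
  have : π ^ k * t * π ^ (n-1-(i+j)) = π ^ (k + (n-1-(i+j))) * t := by
    rw [pow_add]; ring
  rw [this, (pow_eq_zero_iff_ge hπ0 hπ1 _).2 (by omega), zero_mul]


/-- the finset of elements of the ideal (π^j) -/
noncomputable def Ifin (π : R) (j : ℕ) : Finset R :=
  univ.filter (· ∈ Ideal.span {π ^ j})

lemma mem_Ifin {π : R} {j : ℕ} {r : R} : r ∈ Ifin π j ↔ r ∈ Ideal.span {π ^ j} := by
  simp [Ifin]

/-- L7: root counting for the quadratic -/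
lemma roots_bound {π : R} {n : ℕ} (hπ0 : π ^ n = 0) (hπ1 : π ^ (n-1) ≠ 0)
    (hfac : ∀ r : R, ∃ j ≤ n, ∃ u : Rˣ, r = ↑u * π ^ j)
    (x y : R) {k : ℕ} (hk : k ≤ n) :
    (univ.filter fun a : R => a * (x - a) - y ∈ Ideal.span {π ^ k}).card
      ≤ 2 * (Ifin π ((k+1)/2)).card := by
  set A := univ.filter fun a : R => a * (x - a) - y ∈ Ideal.span {π ^ k} with hA
  rcases A.eq_empty_or_nonempty with h | ⟨a₀, ha₀⟩
  · simp [h]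
  have ha₀' : a₀ * (x - a₀) - y ∈ Ideal.span {π ^ k} := by
    rw [hA, mem_filter] at ha₀; exact ha₀.2
  have hsub : A ⊆ (Ifin π ((k+1)/2)).image (fun s => a₀ + s)
      ∪ (Ifin π ((k+1)/2)).image (fun s => x - a₀ - s) := by
    intro a ha
    rw [hA, mem_filter] at ha
    have hdiff : (a - a₀) * (x - a - a₀) ∈ Ideal.span {π ^ k} := by
      have : (a - a₀) * (x - a - a₀)
          = (a * (x - a) - y) - (a₀ * (x - a₀) - y) := by ring
      rw [this]
      exact Ideal.sub_mem _ ha.2 ha₀'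
    rcases mem_half hπ0 hπ1 hfac hk hdiff with h | h
    · apply mem_union_left
      apply mem_image.2 ⟨a - a₀, mem_Ifin.2 h, by ring⟩
    · apply mem_union_right
      apply mem_image.2 ⟨x - a - a₀, mem_Ifin.2 h, by ring⟩
  calc A.card ≤ _ := card_le_card hsub
    _ ≤ ((Ifin π ((k+1)/2)).image (fun s => a₀ + s)).card
        + ((Ifin π ((k+1)/2)).image (fun s => x - a₀ - s)).card := card_union_le _ _
    _ ≤ 2 * (Ifin π ((k+1)/2)).card := by
        have := card_image_le (s := Ifin π ((k+1)/2)) (f := fun s => a₀ + s)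
        have := card_image_le (s := Ifin π ((k+1)/2)) (f := fun s => x - a₀ - s)
        omega


lemma card_Ifin_eq (π : R) (j : ℕ) :
    (Ifin π j).card = Nat.card (Ideal.span {π ^ j} : Ideal R) := by
  rw [Nat.card_eq_fintype_card, Fintype.card_subtype]
  rfl

lemma Ifin_subset (π : R) {i j : ℕ} (h : i ≤ j) : Ifin π j ⊆ Ifin π i := by
  intro r hr
  rw [mem_Ifin] at hr ⊢
  exact Ideal.span_singleton_le_span_singleton.2 (pow_dvd_pow π h) hr

lemma zero_mem_Ifin (π : R) (j : ℕ) : (0:R) ∈ Ifin π j := by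
  simp [mem_Ifin]

/-- annihilator of π^j -/
lemma ann_iff {π : R} {n : ℕ} (hπ0 : π ^ n = 0) (hπ1 : π ^ (n-1) ≠ 0)
    (hfac : ∀ r : R, ∃ j ≤ n, ∃ u : Rˣ, r = ↑u * π ^ j)
    {j : ℕ} (hj : j ≤ n) (r : R) :
    π ^ j * r = 0 ↔ r ∈ Ideal.span {π ^ (n-j)} := by
  constructor
  · intro h
    obtain ⟨i, hi, u, hu⟩ := hfac r
    have h2 : π ^ (j+i) * ↑u = 0 := by
      rw [pow_add]
      calc π ^ j * π ^ i * ↑u = π ^ j * (↑u * π ^ i) := by ring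
        _ = 0 := by rw [← hu, h]
    have h3 : π ^ (j+i) = 0 := by
      calc π ^ (j+i) = π ^ (j+i) * ↑u * ↑u⁻¹ := by rw [mul_assoc, u.mul_inv, mul_one]
        _ = 0 := by rw [h2, zero_mul]
    have hn : n ≤ j + i := (pow_eq_zero_iff_ge hπ0 hπ1 _).1 h3
    rw [hu, Ideal.mem_span_singleton]
    exact Dvd.dvd.mul_left (pow_dvd_pow π (by omega)) _
  · intro h
    rw [Ideal.mem_span_singleton] at h
    obtain ⟨t, ht⟩ := h
    rw [ht, ← mul_assoc, ← pow_add]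
    have : j + (n - j) = n := by omega
    rw [this, hπ0, zero_mul]

/-- L4: complementary cardinalities -/
lemma card_Ifin_mul {π : R} {n : ℕ} (hπ0 : π ^ n = 0) (hπ1 : π ^ (n-1) ≠ 0)
    (hfac : ∀ r : R, ∃ j ≤ n, ∃ u : Rˣ, r = ↑u * π ^ j)
    {j : ℕ} (hj : j ≤ n) :
    (Ifin π j).card * (Ifin π (n-j)).card = Fintype.card R := by
  classical
  set φ : R →+ R := AddMonoidHom.mulLeft (π ^ j) with hφ
  have hker : ∀ r : R, r ∈ φ.ker ↔ r ∈ Ideal.span {π ^ (n-j)} := by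
    intro r
    rw [AddMonoidHom.mem_ker]
    exact ann_iff hπ0 hπ1 hfac hj r
  have hrange : ∀ r : R, r ∈ φ.range ↔ r ∈ Ideal.span {π ^ j} := by
    intro r
    constructor
    · rintro ⟨s, rfl⟩
      rw [Ideal.mem_span_singleton]
      exact Dvd.intro _ rfl
    · intro h
      rw [Ideal.mem_span_singleton] at h
      obtain ⟨t, ht⟩ := h
      exact ⟨t, ht.symm⟩
  have e1 : Nat.card φ.range = (Ifin π j).card := by
    rw [card_Ifin_eq]
    exact Nat.card_congr (Equiv.subtypeEquivRight hrange)
  have e2 : Nat.card φ.ker = (Ifin π (n-j)).card := by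
    rw [card_Ifin_eq]
    exact Nat.card_congr (Equiv.subtypeEquivRight hker)
  have e3 : Nat.card (R ⧸ φ.ker) = Nat.card φ.range :=
    Nat.card_congr (QuotientAddGroup.quotientKerEquivRange φ).toEquiv
  have := AddSubgroup.card_eq_card_quotient_mul_card_addSubgroup (φ.ker)
  rw [e3, e1, e2, Nat.card_eq_fintype_card] at this
  omega

/-- L5: each step at least halves -/
lemma card_Ifin_halve {π : R} {n : ℕ} (hπ0 : π ^ n = 0) (hπ1 : π ^ (n-1) ≠ 0)
    {j : ℕ} (hj : j + 1 ≤ n) :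
    2 * (Ifin π (j+1)).card ≤ (Ifin π j).card := by
  have hsub : Ifin π (j+1) ⊆ Ifin π j := Ifin_subset π (by omega)
  have hle : (Ideal.span {π ^ (j+1)} : Ideal R).toAddSubgroup ≤
      (Ideal.span {π ^ j} : Ideal R).toAddSubgroup := by
    intro x hx
    exact Ideal.span_singleton_le_span_singleton.2 (pow_dvd_pow π (by omega)) hx
  have hdvd : (Ifin π (j+1)).card ∣ (Ifin π j).card := by
    rw [card_Ifin_eq, card_Ifin_eq]
    exact AddSubgroup.card_dvd_of_le hle
  have hne : (Ifin π (j+1)).card ≠ (Ifin π j).card := by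
    intro h
    have heq : Ifin π (j+1) = Ifin π j := eq_of_subset_of_card_le hsub (le_of_eq h.symm)
    have : (π:R) ^ j ∈ Ifin π (j+1) := by
      rw [heq, mem_Ifin, Ideal.mem_span_singleton]
    rw [mem_Ifin, Ideal.mem_span_singleton] at this
    obtain ⟨t, ht⟩ := this
    apply hπ1
    have : π ^ (n-1) = π ^ (n-1-j) * π ^ j := by rw [← pow_add]; congr 1; omega
    rw [this, ht]
    calc π ^ (n-1-j) * (π ^ (j+1) * t) = π ^ ((n-1-j)+(j+1)) * t := by rw [pow_add]; ring
      _ = 0 := by rw [show (n-1-j)+(j+1) = n by omega, hπ0, zero_mul]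
  have hpos : 0 < (Ifin π (j+1)).card := card_pos.2 ⟨0, zero_mem_Ifin π _⟩
  have hle2 := card_le_card hsub
  obtain ⟨k, hk⟩ := hdvd
  have hk2 : 2 ≤ k := by
    rcases Nat.lt_or_ge k 2 with h | h
    · interval_cases k
      · rw [Nat.mul_zero] at hk; omega
      · rw [Nat.mul_one] at hk; exact absurd hk.symm hne
    · exact h
  calc 2 * (Ifin π (j+1)).card ≤ (Ifin π (j+1)).card * k := by nlinarith
    _ = (Ifin π j).card := hk.symm


lemma Ifin_zero (π : R) : Ifin π 0 = univ := by
  ext r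
  simp [mem_Ifin, Ideal.mem_span_singleton]

lemma sum_tail {π : R} {n : ℕ} (hπ0 : π ^ n = 0) (hπ1 : π ^ (n-1) ≠ 0) :
    ∀ m k, k + m = n → (∑ i ∈ Finset.Icc (k+1) n, (Ifin π i).card) ≤ (Ifin π k).card := by
  intro m
  induction m with
  | zero =>
    intro k hk
    rw [Finset.Icc_eq_empty (by omega), sum_empty]
    exact Nat.zero_le _
  | succ m ih =>
    intro k hk
    have hins : Finset.Icc (k+1) n = insert (k+1) (Finset.Icc (k+2) n) := by
      ext i
      simp only [mem_Icc, mem_insert]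
      omega
    rw [hins, sum_insert (by simp only [mem_Icc]; omega)]
    have h1 : (∑ i ∈ Finset.Icc (k+2) n, (Ifin π i).card) ≤ (Ifin π (k+1)).card :=
      ih (k+1) (by omega)
    have h2 := card_Ifin_halve hπ0 hπ1 (j := k) (by omega)
    omega

lemma sum_halves {π : R} {n : ℕ} (hπ0 : π ^ n = 0) (hπ1 : π ^ (n-1) ≠ 0) :
    (∑ j ∈ Finset.Icc 1 n, (Ifin π ((j+1)/2)).card) ≤ 2 * Fintype.card R := by
  classical
  have hcomp := Finset.sum_comp (s := Finset.Icc 1 n)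
    (fun i => (Ifin π i).card) (fun j => (j+1)/2)
  rw [hcomp]
  have step1 : (∑ i ∈ (Finset.Icc 1 n).image (fun j => (j+1)/2),
      ((Finset.Icc 1 n).filter (fun j => (j+1)/2 = i)).card • (Ifin π i).card)
      ≤ ∑ i ∈ (Finset.Icc 1 n).image (fun j => (j+1)/2), 2 * (Ifin π i).card := by
    apply sum_le_sum
    intro i _
    rw [smul_eq_mul]
    apply Nat.mul_le_mul_right
    have hsub : (Finset.Icc 1 n).filter (fun j => (j+1)/2 = i) ⊆ {2*i-1, 2*i} := by
      intro j hj
      simp only [mem_filter, mem_Icc] at hj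
      simp only [mem_insert, mem_singleton]
      omega
    calc _ ≤ ({2*i-1, 2*i} : Finset ℕ).card := card_le_card hsub
      _ ≤ 2 := card_insert_le _ _ |>.trans (by simp)
  refine step1.trans ?_
  have step2 : (∑ i ∈ (Finset.Icc 1 n).image (fun j => (j+1)/2), 2 * (Ifin π i).card)
      ≤ ∑ i ∈ Finset.Icc 1 n, 2 * (Ifin π i).card := by
    apply sum_le_sum_of_subset
    intro i hi
    simp only [mem_image, mem_Icc] at hi
    obtain ⟨j, hj, rfl⟩ := hi
    simp only [mem_Icc]
    omega
  refine step2.trans ?_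
  rw [← Finset.mul_sum]
  have := sum_tail hπ0 hπ1 n 0 (by omega)
  have hzero : (Ifin π 0).card = Fintype.card R := by rw [Ifin_zero, card_univ]
  simp only [Nat.zero_add] at this
  omega

/-- main count of triples -/
lemma count_triples {π : R} {n : ℕ} (hn : 1 ≤ n)
    (hπ0 : π ^ n = 0) (hπ1 : π ^ (n-1) ≠ 0)
    (hfac : ∀ r : R, ∃ j ≤ n, ∃ u : Rˣ, r = ↑u * π ^ j)
    (x y : R) :
    (univ.filter fun p : R × R × R => p.2.1 * p.2.2 = p.1 * (x - p.1) - y).card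
      ≤ 5 * (Fintype.card R * Fintype.card R) := by
  classical
  set q : ℕ := Fintype.card R with hq
  set ν : R → ℕ := fun b => (hfac b).choose with hν
  have hνle : ∀ b, ν b ≤ n := fun b => (hfac b).choose_spec.1
  have hνfac : ∀ b : R, ∃ u : Rˣ, b = ↑u * π ^ ν b := fun b => (hfac b).choose_spec.2
  set f : R → R := fun a => a * (x - a) - y with hf
  set S : Finset (R × R × R) := univ.filter fun p => p.2.1 * p.2.2 = f p.1 with hS
  set A : ℕ → Finset R := fun j => univ.filter fun a => f a ∈ Ideal.span {π ^ j} with hA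
  have hfib : S.card = ∑ j ∈ Finset.range (n+1), (S.filter fun p => ν p.2.1 = j).card :=
    card_eq_sum_card_fiberwise (fun p _ => mem_range.2 (by have := hνle p.2.1; omega))
  have hTj : ∀ j ∈ Finset.range (n+1),
      (S.filter fun p => ν p.2.1 = j).card ≤ (A j).card * q := by
    intro j hj
    rw [mem_range] at hj
    have hjn : j ≤ n := by omega
    set B : Finset R := univ.filter fun b => ν b = j with hB
    set T := S.filter fun p => ν p.2.1 = j with hT
    have hfib2 : T.card = ∑ w ∈ (A j) ×ˢ B,
        (T.filter fun p => (p.1, p.2.1) = w).card := by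
      apply card_eq_sum_card_fiberwise
      intro p hp
      simp only [mem_coe, hT, mem_filter, hS] at hp
      obtain ⟨⟨-, hpc⟩, hpj⟩ := hp
      simp only [mem_coe, mem_product]
      constructor
      · rw [hA, mem_filter]
        refine ⟨mem_univ _, ?_⟩
        obtain ⟨u, hu⟩ := hνfac p.2.1
        rw [← hpc, hu, hpj, Ideal.mem_span_singleton]
        exact ⟨↑u * p.2.2, by ring⟩
      · rw [hB, mem_filter]
        exact ⟨mem_univ _, hpj⟩
    have hfibb : ∀ w ∈ (A j) ×ˢ B,
        (T.filter fun p => (p.1, p.2.1) = w).card ≤ (Ifin π (n-j)).card := by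
      intro w hw
      simp only [mem_product, hB, mem_filter] at hw
      rcases (T.filter fun p => (p.1, p.2.1) = w).eq_empty_or_nonempty with he | ⟨p₀, hp₀⟩
      · rw [he]; simp
      obtain ⟨u, hu⟩ := hνfac w.2
      rw [hw.2.2] at hu
      apply card_le_card_of_injOn (fun p => p.2.2 - p₀.2.2)
      · intro p hp
        simp only [mem_coe] at hp ⊢
        rw [mem_filter] at hp hp₀
        have h1 : p.2.1 * p.2.2 = f p.1 := by
          have := hp.1; rw [hT, mem_filter, hS, mem_filter] at this; exact this.1.2
        have h0 : p₀.2.1 * p₀.2.2 = f p₀.1 := by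
          have := hp₀.1; rw [hT, mem_filter, hS, mem_filter] at this; exact this.1.2
        have heq1 : p.1 = w.1 ∧ p.2.1 = w.2 := by
          have := hp.2; exact ⟨congrArg Prod.fst this, congrArg Prod.snd this⟩
        have heq0 : p₀.1 = w.1 ∧ p₀.2.1 = w.2 := by
          have := hp₀.2; exact ⟨congrArg Prod.fst this, congrArg Prod.snd this⟩
        have hzero : w.2 * (p.2.2 - p₀.2.2) = 0 := by
          calc w.2 * (p.2.2 - p₀.2.2)
              = p.2.1 * p.2.2 - p₀.2.1 * p₀.2.2 := by rw [heq1.2, heq0.2]; ring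
            _ = f p.1 - f p₀.1 := by rw [h1, h0]
            _ = 0 := by rw [heq1.1, heq0.1, sub_self]
        rw [hu] at hzero
        have hzero2 : π ^ j * (↑u * (p.2.2 - p₀.2.2)) = 0 := by
          rw [← hzero]; ring
        have hmem := (ann_iff hπ0 hπ1 hfac hjn _).1 hzero2
        rw [mem_Ifin]
        have : p.2.2 - p₀.2.2 = ↑u⁻¹ * (↑u * (p.2.2 - p₀.2.2)) := by
          rw [← mul_assoc, u.inv_mul, one_mul]
        rw [this]
        exact Ideal.mul_mem_left _ _ hmem
      · intro p hp p' hp' hpp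
        rw [mem_coe, mem_filter] at hp hp'
        have d1 : p.1 = w.1 ∧ p.2.1 = w.2 := ⟨congrArg Prod.fst hp.2, congrArg Prod.snd hp.2⟩
        have d2 : p'.1 = w.1 ∧ p'.2.1 = w.2 := ⟨congrArg Prod.fst hp'.2, congrArg Prod.snd hp'.2⟩
        have e1 : p.1 = p'.1 := by rw [d1.1, d2.1]
        have e2 : p.2.1 = p'.2.1 := by rw [d1.2, d2.2]
        have e3 : p.2.2 = p'.2.2 := by
          have := sub_left_injective (G := R) hpp
          exact this
        exact Prod.ext e1 (Prod.ext e2 e3)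
    have hsum : T.card ≤ ((A j) ×ˢ B).card * (Ifin π (n-j)).card := by
      rw [hfib2]
      calc _ ≤ ((A j) ×ˢ B).card • (Ifin π (n-j)).card := sum_le_card_nsmul _ _ _ hfibb
        _ = _ := smul_eq_mul _ _
    have hBcard : B.card ≤ (Ifin π j).card := by
      apply card_le_card
      intro b hb
      rw [hB, mem_filter] at hb
      obtain ⟨u, hu⟩ := hνfac b
      rw [mem_Ifin, hu, hb.2, Ideal.mem_span_singleton]
      exact Dvd.intro_left _ rfl
    calc T.card ≤ ((A j) ×ˢ B).card * (Ifin π (n-j)).card := hsum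
      _ = (A j).card * B.card * (Ifin π (n-j)).card := by rw [card_product]
      _ ≤ (A j).card * (Ifin π j).card * (Ifin π (n-j)).card := by
          apply Nat.mul_le_mul_right
          exact Nat.mul_le_mul_left _ hBcard
      _ = (A j).card * ((Ifin π j).card * (Ifin π (n-j)).card) := by ring
      _ = (A j).card * q := by rw [card_Ifin_mul hπ0 hπ1 hfac hjn]
  -- now sum over j
  have hsplit : Finset.range (n+1) = insert 0 (Finset.Icc 1 n) := by
    ext i
    simp only [mem_range, mem_insert, mem_Icc]
    omega
  have hA0 : (A 0).card ≤ q := by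
    rw [hq]
    exact (card_filter_le _ _).trans (by rw [card_univ])
  have hAj : ∀ j ∈ Finset.Icc 1 n, (A j).card * q ≤ 2 * (Ifin π ((j+1)/2)).card * q := by
    intro j hj
    rw [mem_Icc] at hj
    apply Nat.mul_le_mul_right
    exact roots_bound hπ0 hπ1 hfac x y hj.2
  calc S.card = ∑ j ∈ Finset.range (n+1), (S.filter fun p => ν p.2.1 = j).card := hfib
    _ ≤ ∑ j ∈ Finset.range (n+1), (A j).card * q := sum_le_sum hTj
    _ = (A 0).card * q + ∑ j ∈ Finset.Icc 1 n, (A j).card * q := by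
        rw [hsplit, sum_insert (by simp)]
    _ ≤ q * q + ∑ j ∈ Finset.Icc 1 n, 2 * (Ifin π ((j+1)/2)).card * q := by
        have := sum_le_sum hAj
        have := Nat.mul_le_mul_right q hA0
        omega
    _ ≤ q * q + 2 * (2 * q) * q := by
        have hsum2 : (∑ j ∈ Finset.Icc 1 n, 2 * (Ifin π ((j+1)/2)).card * q)
            ≤ 2 * (2 * q) * q := by
          calc (∑ j ∈ Finset.Icc 1 n, 2 * (Ifin π ((j+1)/2)).card * q)
              = (∑ j ∈ Finset.Icc 1 n, (Ifin π ((j+1)/2)).card) * (2 * q) := by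
                rw [Finset.sum_mul]
                apply Finset.sum_congr rfl
                intro j _
                ring
            _ ≤ (2 * q) * (2 * q) := Nat.mul_le_mul_right _ (sum_halves hπ0 hπ1)
            _ = 2 * (2 * q) * q := by ring
        omega
    _ ≤ 5 * (q * q) := le_of_eq (by ring)


lemma units_equiv_card : Nat.card Rˣ = Nat.card {x : R // IsUnit x} := by
  apply Nat.card_congr
  exact { toFun := fun u => ⟨u, u.isUnit⟩,
          invFun := fun x => x.prop.unit,
          left_inv := fun u => Units.ext (by simp),
          right_inv := fun x => Subtype.ext (by simp) }

lemma units_lower {π : R} {n : ℕ} (hn : 1 ≤ n)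
    (hπ0 : π ^ n = 0) (hπ1 : π ^ (n-1) ≠ 0)
    (hfac : ∀ r : R, ∃ j ≤ n, ∃ u : Rˣ, r = ↑u * π ^ j) :
    Fintype.card R ≤ 2 * Nat.card Rˣ := by
  classical
  have hsub : univ.filter (fun r : R => ¬ IsUnit r) ⊆ Ifin π 1 := by
    intro r hr
    rw [mem_filter] at hr
    obtain ⟨j, hj, u, hu⟩ := hfac r
    have hj1 : 1 ≤ j := by
      by_contra h
      push_neg at h
      interval_cases j
      · exact hr.2 (by rw [hu, pow_zero, mul_one]; exact u.isUnit)
    rw [mem_Ifin, hu, Ideal.mem_span_singleton, pow_one]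
    exact Dvd.dvd.mul_left (dvd_pow_self π (by omega)) _
  have h1 : 2 * (Ifin π 1).card ≤ (Ifin π 0).card := card_Ifin_halve hπ0 hπ1 (by omega)
  have h0 : (Ifin π 0).card = Fintype.card R := by rw [Ifin_zero, card_univ]
  have hsplit : (univ.filter (fun r : R => IsUnit r)).card
      + (univ.filter (fun r : R => ¬ IsUnit r)).card = Fintype.card R := by
    rw [Finset.card_filter_add_card_filter_not, card_univ]
  have hcard : Nat.card Rˣ = (univ.filter (fun r : R => IsUnit r)).card := by
    rw [units_equiv_card, Nat.card_eq_fintype_card, Fintype.card_subtype]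
  have hle := card_le_card hsub
  omega

lemma abstract_main {π : R} {n : ℕ} (hn : 1 ≤ n)
    (hπ0 : π ^ n = 0) (hπ1 : π ^ (n-1) ≠ 0)
    (hfac : ∀ r : R, ∃ j ≤ n, ∃ u : Rˣ, r = ↑u * π ^ j)
    (x y : R) (hy : IsUnit y) :
    Nat.card {M : Matrix (Fin 2) (Fin 2) R // IsUnit M.det ∧ M.trace = x ∧ M.det = y}
        * Nat.card R
      ≤ 10 * Nat.card {M : Matrix (Fin 2) (Fin 2) R // IsUnit M.det ∧ M.det = y} := by
  classical
  set q : ℕ := Fintype.card R with hq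
  -- Step (a): trace+det count is at most 5 q^2
  have hT : Nat.card {M : Matrix (Fin 2) (Fin 2) R // IsUnit M.det ∧ M.trace = x ∧ M.det = y}
      ≤ 5 * (q * q) := by
    have hinj : Nat.card {M : Matrix (Fin 2) (Fin 2) R // IsUnit M.det ∧ M.trace = x ∧ M.det = y}
        ≤ Nat.card {p : R × R × R // p.2.1 * p.2.2 = p.1 * (x - p.1) - y} := by
      apply Nat.card_le_card_of_injective
        (fun M => (⟨(M.1 0 0, M.1 0 1, M.1 1 0), by
          obtain ⟨M, hdet, htr, hdy⟩ := M
          rw [Matrix.trace_fin_two] at htr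
          rw [Matrix.det_fin_two] at hdy
          simp only
          linear_combination M 0 0 * htr - hdy⟩ :
          {p : R × R × R // p.2.1 * p.2.2 = p.1 * (x - p.1) - y}))
      intro M N h
      have hval : ((M.1 0 0, M.1 0 1, M.1 1 0) : R × R × R)
          = (N.1 0 0, N.1 0 1, N.1 1 0) := congrArg Subtype.val h
      simp only [Prod.mk.injEq] at hval
      obtain ⟨h1, h2, h3⟩ := hval
      have htrM : M.1 0 0 + M.1 1 1 = x := by
        have := M.2.2.1; rwa [Matrix.trace_fin_two] at this
      have htrN : N.1 0 0 + N.1 1 1 = x := by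
        have := N.2.2.1; rwa [Matrix.trace_fin_two] at this
      have h4 : M.1 1 1 = N.1 1 1 := by
        have : M.1 0 0 + M.1 1 1 = N.1 0 0 + N.1 1 1 := by rw [htrM, htrN]
        rw [h1] at this
        exact add_left_cancel this
      apply Subtype.ext
      apply Matrix.ext
      intro i j
      fin_cases i <;> fin_cases j <;> assumption
    refine hinj.trans ?_
    have : Nat.card {p : R × R × R // p.2.1 * p.2.2 = p.1 * (x - p.1) - y}
        = (univ.filter fun p : R × R × R => p.2.1 * p.2.2 = p.1 * (x - p.1) - y).card := by
      rw [Nat.card_eq_fintype_card, Fintype.card_subtype]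
    rw [this]
    exact count_triples hn hπ0 hπ1 hfac x y
  -- Step (c): det count is at least #units * q^2
  have hD : Nat.card Rˣ * (q * q)
      ≤ Nat.card {M : Matrix (Fin 2) (Fin 2) R // IsUnit M.det ∧ M.det = y} := by
    have : Nat.card (Rˣ × R × R) = Nat.card Rˣ * (q * q) := by
      rw [Nat.card_prod, Nat.card_prod, Nat.card_eq_fintype_card (α := R), hq]
    rw [← this]
    apply Nat.card_le_card_of_injective
      (fun t : Rˣ × R × R => (⟨!![(t.1 : R), t.2.1; t.2.2, (↑t.1⁻¹ : R) * (y + t.2.1 * t.2.2)], by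
        have hdet : Matrix.det !![(t.1 : R), t.2.1; t.2.2, (↑t.1⁻¹ : R) * (y + t.2.1 * t.2.2)]
            = y := by
          rw [Matrix.det_fin_two_of]
          calc (t.1 : R) * ((↑t.1⁻¹ : R) * (y + t.2.1 * t.2.2)) - t.2.1 * t.2.2
              = ((t.1 : R) * (↑t.1⁻¹ : R)) * (y + t.2.1 * t.2.2) - t.2.1 * t.2.2 := by ring
            _ = y := by rw [Units.mul_inv]; ring
        exact ⟨by rw [hdet]; exact hy, hdet⟩⟩ :
        {M : Matrix (Fin 2) (Fin 2) R // IsUnit M.det ∧ M.det = y}))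
    intro s t h
    have hM := congrArg Subtype.val h
    have h00 : (s.1 : R) = (t.1 : R) := by
      have := congrFun (congrFun hM 0) 0
      simpa using this
    have h01 : s.2.1 = t.2.1 := by
      have := congrFun (congrFun hM 0) 1
      simpa using this
    have h10 : s.2.2 = t.2.2 := by
      have := congrFun (congrFun hM 1) 0
      simpa using this
    exact Prod.ext (Units.ext h00) (Prod.ext h01 h10)
  -- Step (b): q ≤ 2 #units
  have hu2 : q ≤ 2 * Nat.card Rˣ := units_lower hn hπ0 hπ1 hfac
  -- combine
  have hRq : Nat.card R = q := Nat.card_eq_fintype_card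
  rw [hRq]
  calc Nat.card {M : Matrix (Fin 2) (Fin 2) R // IsUnit M.det ∧ M.trace = x ∧ M.det = y} * q
      ≤ (5 * (q * q)) * q := Nat.mul_le_mul_right q hT
    _ = 5 * (q * (q * q)) := by ring
    _ ≤ 5 * ((2 * Nat.card Rˣ) * (q * q)) := by
        apply Nat.mul_le_mul_left
        exact Nat.mul_le_mul_right _ hu2
    _ = 10 * (Nat.card Rˣ * (q * q)) := by ring
    _ ≤ 10 * Nat.card {M : Matrix (Fin 2) (Fin 2) R // IsUnit M.det ∧ M.det = y} :=
        Nat.mul_le_mul_left _ hD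

end Abstract

theorem stmt_17 (O : Type*) [CommRing O] [IsDomain O] [IsDiscreteValuationRing O]
    (ϖ : O) (hϖ : Irreducible ϖ)
    (hfin : ∀ n : ℕ, Finite (O ⧸ Ideal.span {ϖ ^ n})) :
    ∃ C : ℕ, 0 < C ∧ ∀ (n : ℕ), 0 < n → ∀ x y : O ⧸ Ideal.span {ϖ ^ n}, IsUnit y →
      Nat.card {M : Matrix (Fin 2) (Fin 2) (O ⧸ Ideal.span {ϖ ^ n}) //
          IsUnit M.det ∧ M.trace = x ∧ M.det = y}
        * Nat.card (O ⧸ Ideal.span {ϖ ^ n})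
      ≤ C * Nat.card {M : Matrix (Fin 2) (Fin 2) (O ⧸ Ideal.span {ϖ ^ n}) //
          IsUnit M.det ∧ M.det = y} := by
  refine ⟨10, by norm_num, ?_⟩
  intro n hn x y hy
  haveI : Finite (O ⧸ Ideal.span {ϖ ^ n}) := hfin n
  haveI : Fintype (O ⧸ Ideal.span {ϖ ^ n}) := Fintype.ofFinite _
  obtain ⟨π, hπdef⟩ : ∃ p : O ⧸ Ideal.span {ϖ ^ n},
      p = Ideal.Quotient.mk (Ideal.span {ϖ ^ n}) ϖ := ⟨_, rfl⟩
  have hϖ0 : ϖ ≠ 0 := hϖ.ne_zero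
  have hπ0 : π ^ n = 0 := by
    rw [hπdef, ← map_pow]
    exact Ideal.Quotient.eq_zero_iff_mem.2 (Ideal.mem_span_singleton.2 dvd_rfl)
  have hπ1 : π ^ (n - 1) ≠ 0 := by
    rw [hπdef, ← map_pow]
    intro h
    have hmem := Ideal.Quotient.eq_zero_iff_mem.1 h
    rw [Ideal.mem_span_singleton] at hmem
    obtain ⟨t, ht⟩ := hmem
    have hns : n = (n - 1) + 1 := by omega
    rw [hns, pow_succ] at ht
    have h1 : ϖ ^ (n-1) * 1 = ϖ ^ (n-1) * (ϖ * t) := by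
      rw [mul_one, ← mul_assoc]; exact ht
    have := mul_left_cancel₀ (pow_ne_zero (n-1) hϖ0) h1
    exact hϖ.not_isUnit (IsUnit.of_mul_eq_one _ this.symm)
  have hfac : ∀ r : O ⧸ Ideal.span {ϖ ^ n}, ∃ j ≤ n,
      ∃ u : (O ⧸ Ideal.span {ϖ ^ n})ˣ, r = ↑u * π ^ j := by
    intro r
    obtain ⟨o, rfl⟩ := Ideal.Quotient.mk_surjective r
    by_cases ho : o ∈ Ideal.span {ϖ ^ n}
    · refine ⟨n, le_refl n, 1, ?_⟩
      rw [Units.val_one, one_mul, hπ0]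
      exact Ideal.Quotient.eq_zero_iff_mem.2 ho
    · have ho0 : o ≠ 0 := by rintro rfl; exact ho (Ideal.zero_mem _)
      obtain ⟨j, u, hou⟩ := IsDiscreteValuationRing.eq_unit_mul_pow_irreducible ho0 hϖ
      have hjn : j ≤ n := by
        by_contra hc
        push_neg at hc
        apply ho
        rw [hou, Ideal.mem_span_singleton]
        exact Dvd.dvd.mul_left (pow_dvd_pow ϖ (by omega)) _
      refine ⟨j, hjn, Units.map (Ideal.Quotient.mk (Ideal.span {ϖ ^ n})).toMonoidHom u, ?_⟩
      rw [hou, map_mul, map_pow, hπdef]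
      rfl
  exact abstract_main (by omega) hπ0 hπ1 hfac x y hy
end
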